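/- Let c be a natural number, let w be a Gauss word of length 2c, and let j, j' : Fin (2c) be distinct positions with w j = w j' (the two positions of the same letter). Then for every assignment x, position j is passed over if and only if position j' is passed under; consequently, defining the step step_b(x) = d_{b+1}(x) − d_b(x) (indices mod 2c), one has step_j(x) + step_{j'}(x) = 0 for every assignment x, i.e., the j-th and j'-th columns of the ±1 step matrix sum to the zero column. -/

import Mathlib

/-!
Moving the base from `b` to `b + 1` changes the cyclic order only for the letter `w b`: its
earlier position is `b` from base `b`, but its other position `b'` from base `b + 1`. Hence
`step_b = [b' passed under] - [b passed under]`, and the steps at the two positions of a letter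
cancel. The pass types of the two positions are opposite because exactly one of them is first.
-/

namespace Warping

/-- A Gauss word of length `2c`: every letter occurs at exactly two positions. -/
def IsGaussWord (c : ℕ) (w : Fin (2*c) → Fin c) : Prop :=
  ∀ i : Fin c, (Finset.univ.filter (fun j => w j = i)).card = 2

/-- The cyclic successor of an index. -/
def next {n : ℕ} (b : Fin n) : Fin n :=
  ⟨((b : ℕ) + 1) % n, Nat.mod_lt _ (Nat.lt_of_le_of_lt (Nat.zero_le _) b.isLt)⟩

/-- `j` is the first (smaller) of the two positions of its letter. -/
def isFirst (c : ℕ) (w : Fin (2*c) → Fin c) (j : Fin (2*c)) : Prop :=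
  ∀ j' : Fin (2*c), w j' = w j → j ≤ j'

/-- Under the assignment `x`, position `j` is passed under. -/
def passedUnder (c : ℕ) (w : Fin (2*c) → Fin c) (x : Fin c → Bool) (j : Fin (2*c)) : Prop :=
  (x (w j) = true) ↔ isFirst c w j

/-- Time at which position `j` is met in the cyclic traversal starting at base `b`. -/
def time (c : ℕ) (b j : Fin (2*c)) : ℕ := ((j : ℕ) + 2*c - (b : ℕ)) % (2*c)

/-- The letter `i` is a warping crossing for assignment `x` and base `b`: the position of `i`
met earlier in the cyclic traversal starting at `b` is passed under. -/
def IsWarpingCrossing (c : ℕ) (w : Fin (2*c) → Fin c) (x : Fin c → Bool)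
    (b : Fin (2*c)) (i : Fin c) : Prop :=
  ∃ j : Fin (2*c), w j = i ∧ (∀ j' : Fin (2*c), w j' = i → time c b j ≤ time c b j') ∧
    passedUnder c w x j

open scoped Classical in
/-- The warping degree of the assignment `x` with base point `b`. -/
noncomputable def warpingDegree (c : ℕ) (w : Fin (2*c) → Fin c) (x : Fin c → Bool)
    (b : Fin (2*c)) : ℕ :=
  (Finset.univ.filter (fun i => IsWarpingCrossing c w x b i)).card

/-- The step `d_{b+1}(x) - d_b(x)` of the warping degree sequence. -/
noncomputable def step (c : ℕ) (w : Fin (2*c) → Fin c) (x : Fin c → Bool) (b : Fin (2*c)) : ℤ :=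
  (warpingDegree c w x (next b) : ℤ) - (warpingDegree c w x b : ℤ)

section Time

variable {c : ℕ}

lemma time_eq_ite (b k : Fin (2*c)) :
    time c b k = if (b : ℕ) ≤ k then (k : ℕ) - b else (k : ℕ) + 2*c - b := by
  unfold time
  split_ifs with h
  · rw [show (k : ℕ) + 2*c - b = (k - b) + 2*c by omega, Nat.add_mod_right]
    exact Nat.mod_eq_of_lt (by omega)
  · exact Nat.mod_eq_of_lt (by omega)

lemma val_next_eq_ite {n : ℕ} (b : Fin n) :
    (next b : ℕ) = if (b : ℕ) + 1 < n then (b : ℕ) + 1 else 0 := by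
  unfold next
  split_ifs with h
  · exact Nat.mod_eq_of_lt h
  · simp [show (b : ℕ) + 1 = n by omega]

lemma time_self (b : Fin (2*c)) : time c b b = 0 := by
  simp [time_eq_ite]

lemma time_lt (b k : Fin (2*c)) : time c b k < 2*c := by
  rw [time_eq_ite]
  split_ifs <;> omega

lemma time_injective (b : Fin (2*c)) : Function.Injective (time c b) := by
  intro k k' h
  rw [time_eq_ite, time_eq_ite] at h
  ext
  split_ifs at h <;> omega

lemma time_next_add_one {b k : Fin (2*c)} (h : k ≠ b) :
    time c (next b) k + 1 = time c b k := by
  have h : (k : ℕ) ≠ b := Fin.val_ne_of_ne h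
  rw [time_eq_ite, time_eq_ite, val_next_eq_ite]
  split_ifs <;> omega

lemma time_next_self (b : Fin (2*c)) : time c (next b) b = 2*c - 1 := by
  rw [time_eq_ite, val_next_eq_ite]
  split_ifs <;> omega

end Time

variable {c : ℕ} {w : Fin (2*c) → Fin c}

lemma IsGaussWord.eq_or_eq (hw : IsGaussWord c w) {j j' k : Fin (2*c)} (hjj' : j ≠ j')
    (hww : w j = w j') (hk : w k = w j) : k = j ∨ k = j' := by
  by_contra! hne
  refine (hw (w j)).not_gt (Finset.two_lt_card_iff.2 ⟨j, j', k, ?_⟩)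
  simp [hww, hk, hjj', hne.1.symm, hne.2.symm]

lemma isFirst_iff_le (hw : IsGaussWord c w) {j j' : Fin (2*c)} (hjj' : j ≠ j')
    (hww : w j = w j') : isFirst c w j ↔ j ≤ j' := by
  refine ⟨fun h => h j' hww.symm, fun h k hk => ?_⟩
  rcases hw.eq_or_eq hjj' hww hk with rfl | rfl
  exacts [le_rfl, h]

lemma not_passedUnder_iff (hw : IsGaussWord c w) {j j' : Fin (2*c)} (hjj' : j ≠ j')
    (hww : w j = w j') (x : Fin c → Bool) :
    ¬ passedUnder c w x j ↔ passedUnder c w x j' := by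
  unfold passedUnder
  rw [hww, isFirst_iff_le hw hjj' hww, isFirst_iff_le hw hjj'.symm hww.symm,
    hjj'.le_iff_lt, ← not_lt]
  tauto

lemma isWarpingCrossing_iff_of_time_lt (hw : IsGaussWord c w) {j j' : Fin (2*c)}
    (hjj' : j ≠ j') (hww : w j = w j') (x : Fin c → Bool) {b : Fin (2*c)}
    (hlt : time c b j < time c b j') :
    IsWarpingCrossing c w x b (w j) ↔ passedUnder c w x j := by
  constructor
  · rintro ⟨k, hk, hmin, hu⟩
    rcases hw.eq_or_eq hjj' hww hk with rfl | rfl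
    · exact hu
    · exact absurd (hmin j rfl) hlt.not_ge
  · refine fun hu => ⟨j, rfl, fun k hk => ?_, hu⟩
    rcases hw.eq_or_eq hjj' hww hk with rfl | rfl
    exacts [le_rfl, hlt.le]

lemma isWarpingCrossing_next_iff_of_ne (x : Fin c → Bool) {b : Fin (2*c)} {i : Fin c}
    (hib : i ≠ w b) : IsWarpingCrossing c w x (next b) i ↔ IsWarpingCrossing c w x b i := by
  have hshift : ∀ k, w k = i → time c (next b) k + 1 = time c b k := fun k hk =>
    time_next_add_one (by rintro rfl; exact hib hk.symm)
  refine exists_congr fun k => and_congr_right fun hk => and_congr_left fun _ =>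
    forall₂_congr fun k' hk' => ?_
  have := hshift k hk
  have := hshift k' hk'
  omega

open scoped Classical in
lemma step_eq (hw : IsGaussWord c w) {j j' : Fin (2*c)} (hjj' : j ≠ j') (hww : w j = w j')
    (x : Fin c → Bool) :
    step c w x j = (if passedUnder c w x j' then 1 else 0)
      - (if passedUnder c w x j then 1 else 0) := by
  have hbase : IsWarpingCrossing c w x j (w j) ↔ passedUnder c w x j := by
    refine isWarpingCrossing_iff_of_time_lt hw hjj' hww x ?_
    rw [time_self]
    exact Nat.pos_of_ne_zero fun h => hjj' (time_injective j (h.trans (time_self j).symm)).symm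
  have hnext : IsWarpingCrossing c w x (next j) (w j) ↔ passedUnder c w x j' := by
    rw [hww]
    refine isWarpingCrossing_iff_of_time_lt hw hjj'.symm hww.symm x ?_
    have hne : time c (next j) j' ≠ time c (next j) j := (time_injective _).ne hjj'.symm
    have := time_lt (next j) j'
    rw [time_next_self] at hne ⊢
    omega
  unfold step warpingDegree
  rw [Finset.card_filter, Finset.card_filter]
  push_cast
  rw [← Finset.sum_sub_distrib, Finset.sum_eq_single_of_mem (w j) (Finset.mem_univ _)]
  · simp only [hnext, hbase]
  · intro i _ hi
    simp only [isWarpingCrossing_next_iff_of_ne x hi, sub_self]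

/-- The two positions of one letter have opposite pass types, and hence the corresponding
two columns of the ±1 step matrix sum to the zero column. -/
theorem step_add_step_of_same_letter (c : ℕ) (w : Fin (2*c) → Fin c)
    (hw : IsGaussWord c w) (j j' : Fin (2*c)) (hjj' : j ≠ j') (hww : w j = w j') :
    ∀ x : Fin c → Bool,
      (¬ passedUnder c w x j ↔ passedUnder c w x j') ∧
      step c w x j + step c w x j' = 0 := by
  intro x
  refine ⟨not_passedUnder_iff hw hjj' hww x, ?_⟩
  rw [step_eq hw hjj' hww x, step_eq hw hjj'.symm hww.symm x]
  ring

end Warping
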